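/- Let (X, 𝔄, μ) be a σ-finite measure space and τ a non-singular measurable transformation. If there exists an increasing sequence (α_j) of positive integers and a family (A_i)_{i∈I} of measurable sets of finite positive measure spanning a closed subspace Y of L^{pq}(X) such that lim_{j→∞} μ(τ^{-α_j}(A_i)) = 0 for all i and sup{μ(τ^{-n}(A_i))/μ(A_i) : i ∈ I, n ∈ ℕ} = ∞, then sup_{n∈ℕ} ‖(C_τ^n)|_Y‖ = ∞ (the restrictions of the iterates of C_τ to Y are not uniformly bounded in operator norm). -/

import Mathlib

open MeasureTheory Filter Set
open scoped ENNReal NNReal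

/-- Decreasing rearrangement `g*(t)` of a measurable function. -/
noncomputable def rearr {X : Type*} [MeasurableSpace X] (μ : Measure X) (g : X → ℂ)
    (t : ℝ) : ℝ≥0∞ :=
  sInf {l : ℝ≥0∞ | μ {x | l < (‖g x‖₊ : ℝ≥0∞)} ≤ ENNReal.ofReal t}

/-- Maximal function `g**(t) = (1/t) ∫_0^t g*(s) ds`. -/
noncomputable def maxFun {X : Type*} [MeasurableSpace X] (μ : Measure X) (g : X → ℂ)
    (t : ℝ) : ℝ≥0∞ :=
  (ENNReal.ofReal t)⁻¹ * ∫⁻ s in Set.Ioc (0:ℝ) t, rearr μ g s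

/-- `‖g‖_{pq}^q = (q/p) ∫_0^∞ (t^{1/p} g**(t))^q dt/t`. -/
noncomputable def lorentzQ {X : Type*} [MeasurableSpace X] (μ : Measure X) (g : X → ℂ)
    (p q : ℝ) : ℝ≥0∞ :=
  ENNReal.ofReal (q / p) *
    ∫⁻ t in Set.Ioi (0:ℝ), (ENNReal.ofReal (t ^ (1/p)) * maxFun μ g t) ^ q / ENNReal.ofReal t

/-- The Lorentz norm `‖g‖_{pq}` for `q < ∞`. -/
noncomputable def lorentzNorm {X : Type*} [MeasurableSpace X] (μ : Measure X) (g : X → ℂ)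
    (p q : ℝ) : ℝ≥0∞ :=
  lorentzQ μ g p q ^ (1 / q)

/-- The Lorentz norm `‖g‖_{p∞} = sup_{t>0} t^{1/p} g**(t)`. -/
noncomputable def lorentzSup {X : Type*} [MeasurableSpace X] (μ : Measure X) (g : X → ℂ)
    (p : ℝ) : ℝ≥0∞ :=
  ⨆ (t : ℝ) (_ : 0 < t), ENNReal.ofReal (t ^ (1/p)) * maxFun μ g t

/-- A non-singular measurable transformation. -/
def Nonsingular {X : Type*} [MeasurableSpace X] (μ : Measure X) (τ : X → X) : Prop :=
  Measurable τ ∧ ∀ A : Set X, MeasurableSet A → μ A = 0 → μ (τ ⁻¹' A) = 0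

/-!
For `g = a χ_B` the decreasing rearrangement is `a χ_{[0, μ B)}`, so
`g**(t) = a min(t, μ B) / t` and `‖a χ_B‖_{pq} = a (p')^{1/q} μ(B)^{1/p}` with `p' = p/(p-1)`.
Since `χ_A ∘ τ^n = χ_{τ^{-n} A}`, `C_τ^n` sends the unit vector `χ_{A_i} / ‖χ_{A_i}‖_{pq}`
of `Y` to a vector of norm `(μ(τ^{-n} A_i) / μ(A_i))^{1/p}`, which is unbounded in `i`, `n`.
-/

lemma lintegral_Ioc_zero_ofReal_rpow_sub_one {m r : ℝ} (hm : 0 ≤ m) (hr : 0 < r) :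
    ∫⁻ t in Ioc 0 m, ENNReal.ofReal (t ^ (r - 1)) = ENNReal.ofReal (m ^ r / r) := by
  have hr' : -1 < r - 1 := by linarith
  rw [← ofReal_integral_eq_lintegral_ofReal (intervalIntegral.intervalIntegrable_rpow' hr').1
      ((ae_restrict_mem measurableSet_Ioc).mono fun t ht => Real.rpow_nonneg ht.1.le _),
    ← intervalIntegral.integral_of_le hm, integral_rpow (Or.inl hr'), sub_add_cancel,
    Real.zero_rpow hr.ne', sub_zero]

lemma lintegral_Ioi_ofReal_rpow_neg_sub_one {m r : ℝ} (hm : 0 < m) (hr : 0 < r) :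
    ∫⁻ t in Ioi m, ENNReal.ofReal (t ^ (-r - 1)) = ENNReal.ofReal (m ^ (-r) / r) := by
  have hr' : -r - 1 < -1 := by linarith
  rw [← ofReal_integral_eq_lintegral_ofReal (integrableOn_Ioi_rpow_of_lt hr' hm)
      ((ae_restrict_mem measurableSet_Ioi).mono fun t ht => Real.rpow_nonneg (hm.trans ht).le _),
    integral_Ioi_rpow_of_lt hr' hm, sub_add_cancel, neg_div, div_neg, neg_neg]

lemma lintegral_Ioi_zero_ofReal_rpow (r : ℝ) :
    ∫⁻ t in Ioi (0 : ℝ), ENNReal.ofReal (t ^ r) = ⊤ := by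
  have hcont : ContinuousOn (fun t : ℝ => t ^ r) (Ioi 0) := fun t ht =>
    (Real.continuousAt_rpow_const t r (Or.inl ht.ne')).continuousWithinAt
  by_contra h
  exact not_integrableOn_Ioi_rpow r <| (lintegral_ofReal_ne_top_iff_integrable
    (hcont.aestronglyMeasurable measurableSet_Ioi)
    ((ae_restrict_mem measurableSet_Ioi).mono fun t ht => Real.rpow_nonneg (le_of_lt ht) _)).1 h

lemma rpow_mul_div_rpow_div {t x p q : ℝ} (ht : 0 < t) (hx : 0 ≤ x) :
    (t ^ (1 / p) * (x / t)) ^ q / t = x ^ q * t ^ (q / p - q - 1) := by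
  have hbase : t ^ (1 / p) * (x / t) = x * t ^ (1 / p - 1) := by
    rw [Real.rpow_sub ht, Real.rpow_one]; ring
  rw [hbase, Real.mul_rpow hx (Real.rpow_nonneg ht.le _), ← Real.rpow_mul ht.le,
    Real.rpow_sub ht, Real.rpow_one]
  ring_nf

section IndicatorConst

variable {X : Type*} [MeasurableSpace X] (μ : Measure X) {B : Set X} {a : ℝ}

lemma measure_lt_enorm_indicator_const (ha : 0 ≤ a) (l : ℝ≥0∞) :
    μ {x | l < (‖(B.indicator fun _ => (a : ℂ)) x‖₊ : ℝ≥0∞)}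
      = if l < ENNReal.ofReal a then μ B else 0 := by
  have hnorm : (‖a‖₊ : ℝ≥0∞) = ENNReal.ofReal a := Real.enorm_eq_ofReal ha
  split_ifs with hl
  · congr 1; ext x; by_cases hx : x ∈ B <;> simp [hx, hnorm, hl]
  · convert measure_empty (μ := μ); ext x; by_cases hx : x ∈ B <;> simp [hx, hnorm, hl]

lemma rearr_indicator_const (ha : 0 ≤ a) (t : ℝ) :
    rearr μ (B.indicator fun _ => (a : ℂ)) t =
      if ENNReal.ofReal t < μ B then ENNReal.ofReal a else 0 := by
  simp only [rearr, measure_lt_enorm_indicator_const μ ha]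
  split_ifs with hB
  · convert csInf_Ici (a := ENNReal.ofReal a) using 2
    ext l; by_cases hl : l < ENNReal.ofReal a <;> simp [hl, hB.not_ge, not_lt.mp]
  · refine nonpos_iff_eq_zero.mp (sInf_le ?_)
    simp only [Set.mem_ofPred_eq]; split_ifs <;> simp [not_lt.mp hB]

lemma maxFun_indicator_const_of_measure_eq_top (ha : 0 ≤ a) (hB : μ B = ⊤) {t : ℝ}
    (ht : 0 < t) : maxFun μ (B.indicator fun _ => (a : ℂ)) t = ENNReal.ofReal a := by
  have hrearr : ∀ s ∈ Ioc (0 : ℝ) t,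
      rearr μ (B.indicator fun _ => (a : ℂ)) s = ENNReal.ofReal a := fun s _ => by
    rw [rearr_indicator_const μ ha, hB, if_pos ENNReal.ofReal_lt_top]
  rw [maxFun, setLIntegral_congr_fun measurableSet_Ioc hrearr, setLIntegral_const,
    Real.volume_Ioc, sub_zero, mul_comm, mul_assoc,
    ENNReal.mul_inv_cancel (by simpa using ht) ENNReal.ofReal_ne_top, mul_one]

lemma maxFun_indicator_const (ha : 0 ≤ a) (hB : μ B ≠ ⊤) {t : ℝ} (ht : 0 < t) :
    maxFun μ (B.indicator fun _ => (a : ℂ)) t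
      = ENNReal.ofReal (a * min t (μ B).toReal / t) := by
  set m := (μ B).toReal
  have hrearr : ∀ s ∈ Ioc (0 : ℝ) t, rearr μ (B.indicator fun _ => (a : ℂ)) s
      = (Iio m).indicator (fun _ => ENNReal.ofReal a) s := fun s hs => by
    simp only [rearr_indicator_const μ ha, ENNReal.ofReal_lt_iff_lt_toReal hs.1.le hB,
      indicator_apply, mem_Iio, m]
  have hvol : volume (Iio m ∩ Ioc 0 t) = ENNReal.ofReal (min t m) := by
    rw [measure_congr (Iio_ae_eq_Iic.inter (ae_eq_refl (Ioc (0 : ℝ) t))), inter_comm,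
      Ioc_inter_Iic, Real.volume_Ioc, sub_zero]
  rw [maxFun, setLIntegral_congr_fun measurableSet_Ioc hrearr,
    lintegral_indicator measurableSet_Iio, Measure.restrict_restrict measurableSet_Iio,
    setLIntegral_const, hvol, ENNReal.ofReal_div_of_pos ht, ENNReal.ofReal_mul ha,
    ENNReal.div_eq_inv_mul]

lemma lorentzQ_indicator_const {p q : ℝ} (ha : 0 ≤ a) (hp : 1 < p) (hq : 0 < q)
    (hB0 : 0 < μ B) (hB : μ B ≠ ⊤) :
    lorentzQ μ (B.indicator fun _ => (a : ℂ)) p q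
      = ENNReal.ofReal (a ^ q * (μ B).toReal ^ (q / p) * (p / (p - 1))) := by
  set m := (μ B).toReal
  have hm : 0 < m := ENNReal.toReal_pos hB0.ne' hB
  have hp0 : 0 < p := by linarith
  have hqp : 0 < q - q / p := by
    rw [sub_pos, div_lt_iff₀ hp0]; nlinarith
  have hintegrand : ∀ t ∈ Ioi (0 : ℝ),
      (ENNReal.ofReal (t ^ (1 / p)) * maxFun μ (B.indicator fun _ => (a : ℂ)) t) ^ q
          / ENNReal.ofReal t
        = ENNReal.ofReal ((a * min t m) ^ q * t ^ (q / p - q - 1)) := fun t (ht : 0 < t) => by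
    have hx : 0 ≤ a * min t m := mul_nonneg ha (le_min ht.le hm.le)
    rw [maxFun_indicator_const μ ha hB ht, ← ENNReal.ofReal_mul (Real.rpow_nonneg ht.le _),
      ENNReal.ofReal_rpow_of_nonneg (mul_nonneg (Real.rpow_nonneg ht.le _) (div_nonneg hx ht.le))
        hq.le, ← ENNReal.ofReal_div_of_pos ht, rpow_mul_div_rpow_div ht hx]
  have hhead : ∀ t ∈ Ioc 0 m, ENNReal.ofReal ((a * min t m) ^ q * t ^ (q / p - q - 1))
      = ENNReal.ofReal (a ^ q) * ENNReal.ofReal (t ^ (q / p - 1)) := fun t ht => by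
    rw [min_eq_left ht.2, Real.mul_rpow ha ht.1.le, mul_assoc, ← Real.rpow_add ht.1,
      ← ENNReal.ofReal_mul (Real.rpow_nonneg ha _)]
    ring_nf
  have htail : ∀ t ∈ Ioi m, ENNReal.ofReal ((a * min t m) ^ q * t ^ (q / p - q - 1))
      = ENNReal.ofReal ((a * m) ^ q) * ENNReal.ofReal (t ^ (-(q - q / p) - 1)) :=
    fun t (ht : m < t) => by
    rw [min_eq_right ht.le, ← ENNReal.ofReal_mul (Real.rpow_nonneg (by positivity) _)]
    ring_nf
  rw [lorentzQ, setLIntegral_congr_fun measurableSet_Ioi hintegrand,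
    ← Ioc_union_Ioi_eq_Ioi hm.le, lintegral_union measurableSet_Ioi Ioc_disjoint_Ioi_same,
    setLIntegral_congr_fun measurableSet_Ioc hhead, setLIntegral_congr_fun measurableSet_Ioi htail,
    lintegral_const_mul' _ _ ENNReal.ofReal_ne_top, lintegral_const_mul' _ _ ENNReal.ofReal_ne_top,
    lintegral_Ioc_zero_ofReal_rpow_sub_one hm.le (by positivity),
    lintegral_Ioi_ofReal_rpow_neg_sub_one hm hqp, ← ENNReal.ofReal_mul (by positivity),
    ← ENNReal.ofReal_mul (by positivity), ← ENNReal.ofReal_add (by positivity) (by positivity),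
    ← ENNReal.ofReal_mul (by positivity)]
  congr 1
  have hpow : m ^ q * m ^ (-(q - q / p)) = m ^ (q / p) := by
    rw [← Real.rpow_add hm]; ring_nf
  rw [Real.mul_rpow ha hm.le, mul_assoc (a ^ q), ← mul_div_assoc (m ^ q), hpow]
  have hp1 : 0 < p - 1 := by linarith
  field_simp
  ring

lemma lorentzQ_indicator_const_of_measure_eq_top {p q : ℝ} (ha : 0 < a) (hp : 0 < p)
    (hq : 0 < q) (hB : μ B = ⊤) : lorentzQ μ (B.indicator fun _ => (a : ℂ)) p q = ⊤ := by
  have hintegrand : ∀ t ∈ Ioi (0 : ℝ),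
      (ENNReal.ofReal (t ^ (1 / p)) * maxFun μ (B.indicator fun _ => (a : ℂ)) t) ^ q
          / ENNReal.ofReal t
        = ENNReal.ofReal (a ^ q) * ENNReal.ofReal (t ^ (q / p - 1)) := fun t (ht : 0 < t) => by
    have hat : a = a * t / t := by field_simp
    rw [maxFun_indicator_const_of_measure_eq_top μ ha.le hB ht,
      ← ENNReal.ofReal_mul (Real.rpow_nonneg ht.le _),
      ENNReal.ofReal_rpow_of_nonneg (by positivity) hq.le, ← ENNReal.ofReal_div_of_pos ht,
      hat, rpow_mul_div_rpow_div ht (by positivity), ← hat, Real.mul_rpow ha.le ht.le,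
      mul_assoc, ← Real.rpow_add ht, ← ENNReal.ofReal_mul (Real.rpow_nonneg ha.le _)]
    ring_nf
  rw [lorentzQ, setLIntegral_congr_fun measurableSet_Ioi hintegrand,
    lintegral_const_mul' _ _ ENNReal.ofReal_ne_top, lintegral_Ioi_zero_ofReal_rpow,
    ENNReal.mul_top (ENNReal.ofReal_pos.2 (by positivity)).ne',
    ENNReal.mul_top (ENNReal.ofReal_pos.2 (by positivity)).ne']

lemma lorentzNorm_indicator_const {p q : ℝ} (ha : 0 < a) (hp : 1 < p) (hq : 0 < q)
    (hB0 : 0 < μ B) :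
    lorentzNorm μ (B.indicator fun _ => (a : ℂ)) p q
      = ENNReal.ofReal a * ENNReal.ofReal ((p / (p - 1)) ^ (1 / q)) * μ B ^ (1 / p) := by
  have hp0 : 0 < p := by linarith
  have hp1 : 0 < p - 1 := by linarith
  rcases eq_or_ne (μ B) ⊤ with hB | hB
  · rw [lorentzNorm, lorentzQ_indicator_const_of_measure_eq_top μ ha hp0 hq hB, hB,
      ENNReal.top_rpow_of_pos (by positivity), ENNReal.top_rpow_of_pos (by positivity),
      ENNReal.mul_top (mul_ne_zero (ENNReal.ofReal_pos.2 ha).ne'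
        (ENNReal.ofReal_pos.2 (by positivity)).ne')]
  · set m := (μ B).toReal
    have hm : 0 < m := ENNReal.toReal_pos hB0.ne' hB
    have hroot : (a ^ q * m ^ (q / p) * (p / (p - 1))) ^ (1 / q)
        = a * (p / (p - 1)) ^ (1 / q) * m ^ (1 / p) := by
      rw [Real.mul_rpow (by positivity) (by positivity), Real.mul_rpow (by positivity)
          (by positivity), ← Real.rpow_mul ha.le, ← Real.rpow_mul hm.le,
        mul_one_div_cancel hq.ne', Real.rpow_one, show q / p * (1 / q) = 1 / p by field_simp]
      ring
    rw [lorentzNorm, lorentzQ_indicator_const μ ha.le hp hq hB0 hB,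
      ENNReal.ofReal_rpow_of_nonneg (by positivity) (by positivity), hroot,
      ← ENNReal.ofReal_toReal hB, ENNReal.ofReal_rpow_of_nonneg hm.le (by positivity),
      ENNReal.ofReal_mul (by positivity), ENNReal.ofReal_mul ha.le]

lemma exists_indicator_const_lorentzNorm_eq {A : Set X} {p q : ℝ} (hp : 1 < p) (hq : 0 < q)
    (hA0 : 0 < μ A) (hA : μ A ≠ ⊤) :
    ∃ a : ℝ, ∀ B : Set X, 0 < μ B →
      lorentzNorm μ (B.indicator fun _ => (a : ℂ)) p q = (μ B / μ A) ^ (1 / p) := by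
  have hp0 : 0 < p := by linarith
  set κ := ENNReal.ofReal ((p / (p - 1)) ^ (1 / q)) with hκ_def
  have hκ : κ ≠ 0 := (ENNReal.ofReal_pos.2 (Real.rpow_pos_of_pos
    (div_pos hp0 (by linarith)) _)).ne'
  have hν0 : μ A ^ (1 / p) ≠ 0 := (ENNReal.rpow_pos hA0 hA).ne'
  have hν : μ A ^ (1 / p) ≠ ⊤ := ENNReal.rpow_ne_top_of_nonneg (by positivity) hA
  have hc : κ⁻¹ * (μ A ^ (1 / p))⁻¹ ≠ ⊤ :=
    ENNReal.mul_ne_top (ENNReal.inv_ne_top.2 hκ) (ENNReal.inv_ne_top.2 hν0)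
  have ha : 0 < (κ⁻¹ * (μ A ^ (1 / p))⁻¹).toReal := ENNReal.toReal_pos
    (mul_ne_zero (ENNReal.inv_ne_zero.2 ENNReal.ofReal_ne_top) (ENNReal.inv_ne_zero.2 hν)) hc
  refine ⟨(κ⁻¹ * (μ A ^ (1 / p))⁻¹).toReal, fun B hB => ?_⟩
  rw [lorentzNorm_indicator_const μ ha hp hq hB,
    ← hκ_def, ENNReal.ofReal_toReal hc, mul_right_comm κ⁻¹, ENNReal.inv_mul_cancel hκ
      ENNReal.ofReal_ne_top, one_mul, ENNReal.div_rpow_of_nonneg _ _ (by positivity),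
    ENNReal.div_eq_inv_mul]

end IndicatorConst

theorem stmt_19_general {X ι : Type*} [MeasurableSpace X] (μ : Measure X) (τ : X → X)
    (p q : ℝ) (hp : 1 < p) (hq : 1 ≤ q) (A : ι → Set X)
    (hpos : ∀ i, 0 < μ (A i)) (hfin : ∀ i, μ (A i) < ⊤)
    (hsup : (⨆ i, ⨆ n : ℕ, μ ((τ^[n]) ⁻¹' A i) / μ (A i)) = ⊤) :
    ∀ C : ℝ≥0∞, C < ⊤ → ∃ n : ℕ,
      ∃ g ∈ Submodule.span ℂ {f : X → ℂ | ∃ i, f = (A i).indicator fun _ => (1:ℂ)},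
        lorentzNorm μ g p q ≤ 1 ∧ C < lorentzNorm μ (g ∘ τ^[n]) p q := by
  intro C hC
  have hp0 : 0 < p := by linarith
  obtain ⟨i, n, hn⟩ : ∃ i, ∃ n : ℕ, C ^ p < μ ((τ^[n]) ⁻¹' A i) / μ (A i) := by
    have hCp := ENNReal.rpow_lt_top_of_nonneg hp0.le hC.ne
    rw [← hsup] at hCp
    simpa only [lt_iSup_iff] using hCp
  obtain ⟨a, ha⟩ :=
    exists_indicator_const_lorentzNorm_eq μ hp (by linarith) (hpos i) (hfin i).ne
  have hsmul : ((A i).indicator fun _ => (a : ℂ)) = (a : ℂ) • (A i).indicator fun _ => 1 := by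
    ext x; by_cases hx : x ∈ A i <;> simp [hx]
  have hcomp : ((A i).indicator fun _ => (a : ℂ)) ∘ τ^[n]
      = ((τ^[n]) ⁻¹' A i).indicator fun _ => (a : ℂ) :=
    funext fun _ => (indicator_comp_right (g := fun _ => (a : ℂ)) τ^[n]).symm
  have hpre : 0 < μ ((τ^[n]) ⁻¹' A i) :=
    pos_iff_ne_zero.2 fun h => by simp [h] at hn
  refine ⟨n, (A i).indicator fun _ => (a : ℂ), ?_, ?_, ?_⟩
  · rw [hsmul]; exact Submodule.smul_mem _ _ (Submodule.subset_span ⟨i, rfl⟩)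
  · rw [ha _ (hpos i), ENNReal.div_self (hpos i).ne' (hfin i).ne, ENNReal.one_rpow]
  · rwa [hcomp, ha _ hpre, one_div, ENNReal.lt_rpow_inv_iff hp0]

/-- under the Li–Yorke conditions on the family `(A_i)`, the
restrictions of the iterates of `C_τ` to the (closed) span `Y` of the `χ_{A_i}`
are not uniformly bounded in norm. -/
theorem stmt_19 {X ι : Type*} [MeasurableSpace X] (μ : Measure X) [SigmaFinite μ]
    [Nonempty ι] (τ : X → X) (hns : Nonsingular μ τ)
    (p q : ℝ) (hp : 1 < p) (hq : 1 ≤ q)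
    (hbdd : ∃ C : ℝ≥0∞, C < ⊤ ∧
      ∀ g : X → ℂ, lorentzNorm μ (g ∘ τ) p q ≤ C * lorentzNorm μ g p q)
    (A : ι → Set X) (hmeas : ∀ i, MeasurableSet (A i))
    (hpos : ∀ i, 0 < μ (A i)) (hfin : ∀ i, μ (A i) < ⊤)
    (α : ℕ → ℕ) (hα : StrictMono α) (hαpos : ∀ j, 0 < α j)
    (hlim : ∀ i, Filter.Tendsto (fun j => μ ((τ^[α j]) ⁻¹' A i)) Filter.atTop (nhds 0))
    (hsup : (⨆ i, ⨆ n : ℕ, μ ((τ^[n]) ⁻¹' A i) / μ (A i)) = ⊤) :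
    ∀ C : ℝ≥0∞, C < ⊤ → ∃ n : ℕ,
      ∃ g ∈ Submodule.span ℂ {f : X → ℂ | ∃ i, f = (A i).indicator fun _ => (1:ℂ)},
        lorentzNorm μ g p q ≤ 1 ∧ C < lorentzNorm μ (g ∘ τ^[n]) p q :=
  stmt_19_general μ τ p q hp hq A hpos hfin hsup
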